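/- arXiv:2511.01713 — 2 statements merged into one kernel-verified Lean document; each statement's English description precedes it below -/
import Mathlib

section
/- Jung's theorem in ℝ³: every compact subset S ⊂ ℝ³ of diameter d is contained in a closed ball of radius √(3/8)·d. -/
open Metric Set RealInnerProductSpace
set_option maxHeartbeats 1000000

local notation "E3" => EuclideanSpace ℝ (Fin 3)

/-- Jung's theorem in `ℝ³`: every compact subset `S ⊂ ℝ³` of diameter `d` is contained in
a closed ball of radius `√(3/8)·d`. -/
theorem jung_theorem_dim3 (S : Set (EuclideanSpace ℝ (Fin 3))) (hS : IsCompact S) :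
    ∃ c : EuclideanSpace ℝ (Fin 3),
      S ⊆ Metric.closedBall c (Real.sqrt (3/8) * Metric.diam S) := by
  classical
  rcases S.eq_empty_or_nonempty with rfl | ⟨x₀, hx₀⟩
  · exact ⟨0, by simp⟩
  set d := Metric.diam S with hd
  have hd0 : 0 ≤ d := Metric.diam_nonneg
  have hSb : Bornology.IsBounded S := hS.isBounded
  -- the radius function
  set g : E3 → ℝ := fun c => sSup ((fun x => dist x c) '' S) with hgdef
  have hcont : ∀ c : E3, Continuous fun x : E3 => dist x c := fun c => Continuous.dist continuous_id continuous_const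
  have hbdd : ∀ c, BddAbove ((fun x => dist x c) '' S) := fun c =>
    (hS.image (hcont c)).bddAbove
  have hne : ∀ c, ((fun x => dist x c) '' S).Nonempty := fun c => ⟨_, ⟨x₀, hx₀, rfl⟩⟩
  have hle : ∀ c, ∀ x ∈ S, dist x c ≤ g c := fun c x hx => le_csSup (hbdd c) ⟨x, hx, rfl⟩
  have hgle : ∀ c r, (∀ x ∈ S, dist x c ≤ r) → g c ≤ r := by
    intro c r h
    exact csSup_le (hne c) (by rintro y ⟨x, hx, rfl⟩; exact h x hx)
  have hglip : LipschitzWith 1 g := by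
    apply LipschitzWith.of_dist_le_mul
    intro a b
    rw [NNReal.coe_one, one_mul, Real.dist_eq, abs_sub_le_iff]
    constructor
    · have : g a ≤ g b + dist a b := hgle a _ (fun x hx =>
        (dist_triangle x b a).trans (by
          have := hle b x hx; rw [dist_comm b a]; linarith))
      linarith
    · have : g b ≤ g a + dist a b := hgle b _ (fun x hx =>
        (dist_triangle x a b).trans (by
          have := hle a x hx; rw [dist_comm a b]; linarith))
      linarith
  have hgcont : Continuous g := hglip.continuous
  -- g x₀ ≤ d
  have hgx₀ : g x₀ ≤ d := hgle x₀ d (fun x hx => Metric.dist_le_diam_of_mem hSb hx hx₀)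
  -- minimize g over a big ball
  obtain ⟨c₀, hc₀K, hmin⟩ : ∃ c₀ ∈ Metric.closedBall x₀ (2*d+1),
      ∀ c ∈ Metric.closedBall x₀ (2*d+1), g c₀ ≤ g c := by
    obtain ⟨c₀, h1, h2⟩ := (isCompact_closedBall x₀ (2*d+1)).exists_isMinOn
      ⟨x₀, Metric.mem_closedBall_self (by linarith)⟩ hgcont.continuousOn
    exact ⟨c₀, h1, fun c hc => h2 hc⟩
  have hminglob : ∀ c : E3, g c₀ ≤ g c := by
    intro c
    by_cases hc : c ∈ Metric.closedBall x₀ (2*d+1)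
    · exact hmin c hc
    · have h1 : 2*d+1 < dist x₀ c := by
        rw [Metric.mem_closedBall, dist_comm] at hc; linarith [not_le.mp hc]
      have h2 : dist x₀ c ≤ g c := hle c x₀ hx₀
      have h3 : g c₀ ≤ g x₀ := hmin x₀ (Metric.mem_closedBall_self (by linarith))
      linarith
  set r := g c₀ with hr
  have hr0 : 0 ≤ r := le_trans dist_nonneg (hle c₀ x₀ hx₀)
  -- it suffices to show r ≤ √(3/8) * d
  suffices hrd : r ≤ Real.sqrt (3/8) * d by
    exact ⟨c₀, fun x hx => Metric.mem_closedBall.mpr ((hle c₀ x hx).trans hrd)⟩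
  rcases eq_or_lt_of_le hr0 with hr0' | hrpos
  · rw [← hr0']
    positivity
  -- contact set
  set T : Set E3 := {x ∈ S | dist x c₀ = r} with hT
  have hTS : T ⊆ S := fun x hx => hx.1
  have hTne : T.Nonempty := by
    have : r ∈ (fun x => dist x c₀) '' S :=
      (hS.image (hcont c₀)).sSup_mem (hne c₀)
    obtain ⟨x, hx, hxr⟩ := this
    exact ⟨x, hx, hxr⟩
  have hTcl : c₀ ∈ closure (convexHull ℝ T) := by
    by_contra hc
    obtain ⟨f, u, hfu, hub⟩ := geometric_hahn_banach_point_closed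
      ((convex_convexHull ℝ T).closure) isClosed_closure hc
    set v : E3 := (InnerProductSpace.toDual ℝ (EuclideanSpace ℝ (Fin 3))).symm f with hv
    have hvy : ∀ y : E3, ⟪v, y⟫ = f y := fun y => InnerProductSpace.toDual_symm_apply
    set δ : ℝ := u - f c₀ with hδ
    have hδ0 : 0 < δ := by simp [hδ]; linarith
    have hfT : ∀ x ∈ T, δ < f x - f c₀ := by
      intro x hx
      have : u < f x := hub x (subset_closure (subset_convexHull ℝ T hx))
      simp [hδ]; linarith
    have hvne : v ≠ 0 := by
      intro h0
      obtain ⟨x₁, hx₁⟩ := hTne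
      have h1 := hfT x₁ hx₁
      have h2 : ⟪v, x₁ - c₀⟫ = f x₁ - f c₀ := by rw [hvy]; simp
      rw [h0] at h2
      simp at h2
      linarith
    have hvn : 0 < ‖v‖ := norm_pos_iff.mpr hvne
    -- the "far" set
    set K : Set E3 := S ∩ {x : E3 | f x - f c₀ ≤ δ/2} with hK
    have hKcpt : IsCompact K := hS.inter_right
      (isClosed_le (f.continuous.sub continuous_const) continuous_const)
    set m : ℝ := sSup ((fun x => dist x c₀) '' K) with hm
    have hmr : m < r := by
      rcases K.eq_empty_or_nonempty with hKe | hKne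
      · rw [hm, hKe]; simp [Real.sSup_empty]; exact hrpos
      · have hmem : m ∈ (fun x => dist x c₀) '' K :=
          (hKcpt.image (hcont c₀)).sSup_mem (hKne.image _)
        obtain ⟨x, hxK, hxm⟩ := hmem
        have h1 : dist x c₀ ≤ r := hle c₀ x hxK.1
        rcases eq_or_lt_of_le h1 with h2 | h2
        · exfalso
          have hxT : x ∈ T := ⟨hxK.1, h2⟩
          have h4 := hfT x hxT
          have h5 : f x - f c₀ ≤ δ/2 := hxK.2
          linarith
        · rw [← hxm]; exact h2
    have hmbdd : ∀ x ∈ K, dist x c₀ ≤ m :=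
      fun x hx => le_csSup ((hKcpt.image (hcont c₀)).bddAbove) ⟨x, hx, rfl⟩
    have hm0 : 0 ≤ m := by
      rcases K.eq_empty_or_nonempty with hKe | ⟨x, hx⟩
      · rw [hm, hKe]; simp [Real.sSup_empty]
      · exact le_trans dist_nonneg (hmbdd x hx)
    -- choose t
    set t : ℝ := min ((r-m)/(2*‖v‖)) (δ/(2*‖v‖^2)) with ht
    have ht0 : 0 < t := by
      apply lt_min
      · apply div_pos (by linarith) (by positivity)
      · apply div_pos hδ0 (by positivity)
    have htv : t * ‖v‖ ≤ (r-m)/2 := by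
      have h1 : t ≤ (r-m)/(2*‖v‖) := min_le_left _ _
      have h2 : (r-m)/(2*‖v‖) * ‖v‖ = (r-m)/2 := by
        field_simp
      nlinarith
    have htv2 : t * ‖v‖^2 ≤ δ/2 := by
      have h1 : t ≤ δ/(2*‖v‖^2) := min_le_right _ _
      calc t * ‖v‖^2 ≤ δ/(2*‖v‖^2) * ‖v‖^2 := by nlinarith [sq_nonneg ‖v‖]
        _ = δ/2 := by field_simp
    set c₁ : E3 := c₀ + t • v with hc₁
    -- bound for far points
    have hfar : ∀ x ∈ K, dist x c₁ ≤ m + (r-m)/2 := by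
      intro x hx
      have h1 : dist c₀ c₁ = t * ‖v‖ := by
        rw [hc₁, dist_eq_norm]
        simp [norm_smul, abs_of_pos ht0]
      calc dist x c₁ ≤ dist x c₀ + dist c₀ c₁ := dist_triangle _ _ _
        _ ≤ m + t*‖v‖ := by rw [h1]; linarith [hmbdd x hx]
        _ ≤ m + (r-m)/2 := by linarith
    -- bound for near points
    have hnear : ∀ x ∈ S, x ∉ K → dist x c₁ ^ 2 ≤ r^2 - t*δ/2 := by
      intro x hxS hxK
      have hfx : δ/2 < f x - f c₀ := by
        by_contra h
        exact hxK ⟨hxS, le_of_not_gt h⟩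
      have hinner : ⟪v, x - c₀⟫ = f x - f c₀ := (hvy (x - c₀)).trans (map_sub f x c₀)
      have hdist : dist x c₁ ^ 2 = ‖x - c₀‖^2 - 2*(t * ⟪v, x - c₀⟫) + t^2*‖v‖^2 := by
        have hxc : x - c₁ = (x - c₀) - t • v := by rw [hc₁]; abel
        rw [dist_eq_norm, hxc, norm_sub_sq_real, real_inner_smul_right,
          real_inner_comm (x - c₀) v, norm_smul, Real.norm_eq_abs, abs_of_pos ht0]
        ring
      have hxr : ‖x - c₀‖ ≤ r := by rw [← dist_eq_norm]; exact hle c₀ x hxS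
      have hxr2 : ‖x - c₀‖^2 ≤ r^2 := by nlinarith [norm_nonneg (x - c₀)]
      rw [hdist, hinner]
      have h2 : t^2 * ‖v‖^2 ≤ t * (δ/2) := by
        calc t^2*‖v‖^2 = t * (t*‖v‖^2) := by ring
          _ ≤ t * (δ/2) := by nlinarith
      nlinarith
    -- combine: g c₁ < r
    have hB : g c₁ ≤ max (m + (r-m)/2) (Real.sqrt (r^2 - t*δ/2)) := by
      apply hgle
      intro x hx
      by_cases hxK : x ∈ K
      · exact le_max_of_le_left (hfar x hxK)
      · apply le_max_of_le_right
        have := hnear x hx hxK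
        calc dist x c₁ = Real.sqrt (dist x c₁ ^ 2) := by
              rw [Real.sqrt_sq dist_nonneg]
          _ ≤ Real.sqrt (r^2 - t*δ/2) := Real.sqrt_le_sqrt this

    have hBr : max (m + (r-m)/2) (Real.sqrt (r^2 - t*δ/2)) < r := by
      apply max_lt
      · linarith
      · have h1 : r^2 - t*δ/2 < r^2 := by nlinarith [mul_pos ht0 hδ0]
        obtain ⟨x₁, hx₁T⟩ := hTne
        have hfx₁ := hfT x₁ hx₁T
        have hx₁K : x₁ ∉ K := by
          intro hk
          have h5 : f x₁ - f c₀ ≤ δ/2 := hk.2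
          linarith
        have h6 := hnear x₁ (hTS hx₁T) hx₁K
        have h7 : (0:ℝ) ≤ dist x₁ c₁ ^ 2 := sq_nonneg _
        calc Real.sqrt (r^2 - t*δ/2) < Real.sqrt (r^2) := by
              apply Real.sqrt_lt_sqrt (by linarith) h1
          _ = r := Real.sqrt_sq hr0
    have hcontr := hminglob c₁
    linarith [lt_of_le_of_lt hB hBr]
  -- main algebraic estimate
  have hkey : 2 * r^2 ≤ 3/4 * d^2 := by
    apply le_of_forall_pos_le_add
    intro ε' hε'
    set ε : ℝ := ε' / (2*r) with hε
    have hε0 : 0 < ε := by positivity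
    obtain ⟨p, hpT, hpd⟩ := Metric.mem_closure_iff.mp hTcl ε hε0
    rw [convexHull_eq_union] at hpT
    simp only [Set.mem_iUnion] at hpT
    obtain ⟨tt, htT, hAI, hp⟩ := hpT
    -- card bound
    have hcard : (tt.card : ℝ) ≤ 4 := by
      have h1 := hAI.card_le_finrank_succ
      have h2 : Module.finrank ℝ (vectorSpan ℝ (Set.range ((↑) : tt → E3))) ≤ 3 := by
        have := Submodule.finrank_le (vectorSpan ℝ (Set.range ((↑) : tt → E3)))
        simpa [finrank_euclideanSpace_fin] using this
      have h3 : Fintype.card tt = tt.card := Fintype.card_coe tt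
      have : tt.card ≤ 4 := by omega
      exact_mod_cast this
    rw [Finset.convexHull_eq] at hp
    obtain ⟨w, hw0, hw1, hcm⟩ := hp
    rw [Finset.centerMass_eq_of_sum_1 _ _ hw1] at hcm
    simp only [id] at hcm
    have httne : tt.Nonempty := by
      rcases tt.eq_empty_or_nonempty with h | h
      · rw [h] at hw1; simp at hw1
      · exact h
    have hcardpos : 0 < tt.card := Finset.card_pos.mpr httne
    -- big weight element
    obtain ⟨j, hjt, hjw⟩ : ∃ j ∈ tt, 1/(tt.card : ℝ) ≤ w j := by
      refine Finset.exists_le_of_sum_le httne ?_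
      rw [Finset.sum_const, nsmul_eq_mul, mul_one_div,
        div_self (by exact_mod_cast hcardpos.ne' : (tt.card:ℝ) ≠ 0), hw1]
    have hjw4 : 1/4 ≤ w j := by
      refine le_trans ?_ hjw
      exact one_div_le_one_div_of_le (by exact_mod_cast hcardpos) hcard
    -- key identity
    have hdistr : ∀ i ∈ tt, ‖i - c₀‖ = r := by
      intro i hi
      have := (htT hi).2
      rwa [dist_eq_norm] at this
    have hident : ∑ i ∈ tt, w i * ‖i - j‖^2 = 2*r^2 - 2 * ⟪p - c₀, j - c₀⟫ := by
      have heach : ∀ i ∈ tt, w i * ‖i - j‖^2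
          = w i * (2*r^2) - 2 * (w i * ⟪i - c₀, j - c₀⟫) := by
        intro i hi
        have h1 : i - j = (i - c₀) - (j - c₀) := by abel
        rw [h1, norm_sub_sq_real, hdistr i hi, hdistr j hjt]
        ring
      rw [Finset.sum_congr rfl heach, Finset.sum_sub_distrib, ← Finset.sum_mul, hw1]
      congr 1
      · ring
      rw [← Finset.mul_sum]
      congr 1
      have : ∑ i ∈ tt, w i * ⟪i - c₀, j - c₀⟫ = ⟪∑ i ∈ tt, w i • (i - c₀), j - c₀⟫ := by
        rw [sum_inner]
        apply Finset.sum_congr rfl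
        intro i hi
        rw [real_inner_smul_left]
      rw [this]
      congr 1
      have : ∑ i ∈ tt, w i • (i - c₀) = (∑ i ∈ tt, w i • i) - (∑ i ∈ tt, w i) • c₀ := by
        rw [Finset.sum_smul]
        rw [← Finset.sum_sub_distrib]
        apply Finset.sum_congr rfl
        intro i hi
        rw [smul_sub]
      rw [this, hcm, hw1, one_smul]
    -- upper bound
    have hupper : ∑ i ∈ tt, w i * ‖i - j‖^2 ≤ (1 - w j) * d^2 := by
      have hsplit : ∑ i ∈ tt, w i * ‖i - j‖^2
          = ∑ i ∈ tt.erase j, w i * ‖i - j‖^2 := by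
        rw [← Finset.sum_erase_add _ _ hjt]
        simp
      rw [hsplit]
      have h1 : ∑ i ∈ tt.erase j, w i * ‖i - j‖^2 ≤ ∑ i ∈ tt.erase j, w i * d^2 := by
        apply Finset.sum_le_sum
        intro i hi
        have hiS : i ∈ S := hTS (htT (Finset.mem_of_mem_erase hi))
        have hjS : (j : E3) ∈ S := hTS (htT hjt)
        have hij : ‖i - j‖ ≤ d := by
          rw [← dist_eq_norm]; exact Metric.dist_le_diam_of_mem hSb hiS hjS
        have hwi : 0 ≤ w i := hw0 i (Finset.mem_of_mem_erase hi)
        nlinarith [mul_le_mul_of_nonneg_left (mul_self_le_mul_self (norm_nonneg (i - (j:E3))) hij) hwi]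
      have h2 : ∑ i ∈ tt.erase j, w i * d^2 = (1 - w j) * d^2 := by
        rw [← Finset.sum_mul]
        congr 1
        rw [Finset.sum_erase_eq_sub hjt, hw1]
      linarith
    -- inner product bound
    have hip : |⟪p - c₀, j - c₀⟫| ≤ ε * r := by
      calc |⟪p - c₀, j - c₀⟫| ≤ ‖p - c₀‖ * ‖j - c₀‖ := abs_real_inner_le_norm _ _
        _ ≤ ε * r := by
          apply mul_le_mul ?_ (le_of_eq (hdistr j hjt)) (norm_nonneg _) hε0.le
          rw [← dist_eq_norm, dist_comm]
          exact hpd.le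
    have hwj1 : 1 - w j ≤ 3/4 := by linarith
    have hd2 : 0 ≤ d^2 := sq_nonneg d
    have : 2*r^2 - 2*⟪p - c₀, j - c₀⟫ ≤ (1 - w j)*d^2 := by
      rw [← hident]; exact hupper
    have : 2*r^2 ≤ 3/4*d^2 + 2*(ε*r) := by
      have habs := abs_le.mp hip
      nlinarith
    have hεr : 2*(ε*r) = ε' := by
      have hrne : r ≠ 0 := ne_of_gt hrpos
      rw [hε]; field_simp
    linarith
  -- conclude
  have : r^2 ≤ 3/8 * d^2 := by linarith
  calc r = Real.sqrt (r^2) := (Real.sqrt_sq hr0).symm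
    _ ≤ Real.sqrt (3/8 * d^2) := Real.sqrt_le_sqrt this
    _ = Real.sqrt (3/8) * d := by
      rw [Real.sqrt_mul (by norm_num), Real.sqrt_sq hd0]
end

section
/- For fixed constants K_min > 0, E > 0, r > 0, the supremum over C ∈ (0,1] of min{ C·√K_min, ((1 + √(1 − C²))/C)·(E/r²) } equals √K_min if √K_min < E/r², and equals √((E/r²)(2√K_min − E/r²)) if √K_min ≥ E/r². -/
/-- For fixed constants `K_min > 0`, `E > 0`, `r > 0`, the supremum over `C ∈ (0,1]` of
`min{ C√K_min, ((1 + √(1 − C²))/C)(E/r²) }` equals `√K_min` if `√K_min < E/r²`, and equals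
`√((E/r²)(2√K_min − E/r²))` if `√K_min ≥ E/r²`. -/
theorem sSup_min_eq (Kmin E r : ℝ) (hK : 0 < Kmin) (hE : 0 < E) (hr : 0 < r) :
    sSup ((fun C : ℝ => min (C * Real.sqrt Kmin)
        (((1 + Real.sqrt (1 - C ^ 2)) / C) * (E / r ^ 2))) '' Set.Ioc (0:ℝ) 1) =
      if Real.sqrt Kmin < E / r ^ 2 then Real.sqrt Kmin
      else Real.sqrt ((E / r ^ 2) * (2 * Real.sqrt Kmin - E / r ^ 2)) := by
  set k := Real.sqrt Kmin with hkdef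
  set e := E / r ^ 2 with hedef
  have hk : 0 < k := Real.sqrt_pos.mpr hK
  have he : 0 < e := by positivity
  -- antitonicity of the second branch
  have hmono : ∀ a b : ℝ, 0 < a → a ≤ b → b ≤ 1 →
      (1 + Real.sqrt (1 - b ^ 2)) / b * e ≤ (1 + Real.sqrt (1 - a ^ 2)) / a * e := by
    intro a b ha hab hb1
    have hb : 0 < b := lt_of_lt_of_le ha hab
    have hs : Real.sqrt (1 - b ^ 2) ≤ Real.sqrt (1 - a ^ 2) :=
      Real.sqrt_le_sqrt (by nlinarith)
    have hsb : 0 ≤ Real.sqrt (1 - b ^ 2) := Real.sqrt_nonneg _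
    have key : a * Real.sqrt (1 - b ^ 2) ≤ b * Real.sqrt (1 - a ^ 2) :=
      mul_le_mul hab hs hsb hb.le
    have h1 : (1 + Real.sqrt (1 - b ^ 2)) / b ≤ (1 + Real.sqrt (1 - a ^ 2)) / a := by
      rw [div_le_div_iff₀ hb ha]
      nlinarith
    exact mul_le_mul_of_nonneg_right h1 he.le
  by_cases h : k < e
  · rw [if_pos h]
    apply IsGreatest.csSup_eq
    constructor
    · refine ⟨1, ⟨zero_lt_one, le_refl 1⟩, ?_⟩
      simp only [one_pow, sub_self, Real.sqrt_zero, add_zero, one_mul, div_one]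
      exact min_eq_left h.le
    · rintro x ⟨C, ⟨hC0, hC1⟩, rfl⟩
      calc min (C * k) ((1 + Real.sqrt (1 - C ^ 2)) / C * e) ≤ C * k := min_le_left _ _
        _ ≤ 1 * k := by nlinarith
        _ = k := one_mul k
  · push_neg at h
    rw [if_neg (not_lt.mpr h)]
    set M := Real.sqrt (e * (2 * k - e)) with hMdef
    have hprod : 0 ≤ e * (2 * k - e) := by nlinarith
    have hM2 : M ^ 2 = e * (2 * k - e) := Real.sq_sqrt hprod
    have hM : 0 < M := Real.sqrt_pos.mpr (by nlinarith)
    have hMk : M ≤ k := by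
      have : M ≤ Real.sqrt (k ^ 2) := Real.sqrt_le_sqrt (by nlinarith)
      rwa [Real.sqrt_sq hk.le] at this
    set C₀ := M / k with hC0def
    have hC₀pos : 0 < C₀ := div_pos hM hk
    have hC₀le : C₀ ≤ 1 := by rw [div_le_one hk]; exact hMk
    have hC₀k : C₀ * k = M := div_mul_cancel₀ M hk.ne'
    have hsq : 1 - C₀ ^ 2 = ((k - e) / k) ^ 2 := by
      field_simp [hC0def]
      nlinarith [hM2]
    have hsqrt : Real.sqrt (1 - C₀ ^ 2) = (k - e) / k := by
      rw [hsq, Real.sqrt_sq (div_nonneg (by linarith) hk.le)]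
    have hg : (1 + Real.sqrt (1 - C₀ ^ 2)) / C₀ * e = M := by
      rw [hsqrt, hC0def]
      field_simp
      nlinarith [hM2]
    apply IsGreatest.csSup_eq
    constructor
    · refine ⟨C₀, ⟨hC₀pos, hC₀le⟩, ?_⟩
      simp only [hC₀k, hg, min_self]
    · rintro x ⟨C, ⟨hC0, hC1⟩, rfl⟩
      rcases le_total C C₀ with hle | hle
      · calc min (C * k) ((1 + Real.sqrt (1 - C ^ 2)) / C * e) ≤ C * k := min_le_left _ _
          _ ≤ C₀ * k := by nlinarith
          _ = M := hC₀k
      · calc min (C * k) ((1 + Real.sqrt (1 - C ^ 2)) / C * e)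
            ≤ (1 + Real.sqrt (1 - C ^ 2)) / C * e := min_le_right _ _
          _ ≤ (1 + Real.sqrt (1 - C₀ ^ 2)) / C₀ * e := hmono C₀ C hC₀pos hle hC1
          _ = M := hg
end
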